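/- arXiv:2003.13831 — 3 statements merged into one kernel-verified Lean document; each statement's English description precedes it below -/
import Mathlib

section
/- For any forward nested regular expression E, any graphs G and H, any simulation relation R of G by H, and any nodes n, m with (n, m) ∈ R: if (n, n') ∈ ⟦E⟧_G for some node n' of G, then there exists a node m' of H such that (m, m') ∈ ⟦E⟧_H and (n', m') ∈ R. -/
variable {N L : Type*}

def nodes (G : Set (N × L × N)) : Set N :=
  {n | ∃ p m, (n, p, m) ∈ G ∨ (m, p, n) ∈ G}

def IsSimulation (G H : Set (N × L × N)) (R : N → N → Prop) : Prop :=
  (∀ n m, R n m → n ∈ nodes G ∧ m ∈ nodes H) ∧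
  (∀ n m, R n m → ∀ p n', (n, p, n') ∈ G → ∃ m', (m, p, m') ∈ H ∧ R n' m')

/-- Forward nested regular expressions. -/
inductive NRE (N L : Type*) where
  | eps : NRE N L
  | pred : L → NRE N L
  | wild : NRE N L
  | node : N → NRE N L
  | test : NRE N L → NRE N L
  | star : NRE N L → NRE N L
  | comp : NRE N L → NRE N L → NRE N L
  | alt : NRE N L → NRE N L → NRE N L

/-- Semantics of forward NREs as binary relations on nodes. -/
def sem (G : Set (N × L × N)) : NRE N L → N → N → Prop
  | .eps => fun n m => n = m ∧ n ∈ nodes G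
  | .pred p => fun n m => (n, p, m) ∈ G
  | .wild => fun n m => ∃ p, (n, p, m) ∈ G
  | .node ℓ => fun n m => n = m ∧ n = ℓ ∧ n ∈ nodes G
  | .test e => fun n m => n = m ∧ ∃ k, sem G e n k
  | .star e => Relation.ReflTransGen (sem G e)
  | .comp e1 e2 => fun n m => ∃ k, sem G e1 n k ∧ sem G e2 k m
  | .alt e1 e2 => fun n m => sem G e1 n m ∨ sem G e2 n m

/-- Node labels (constants) tested by an NRE. -/
def labels : NRE N L → Set N
  | .eps => ∅
  | .pred _ => ∅
  | .wild => ∅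
  | .node ℓ => {ℓ}
  | .test e => labels e
  | .star e => labels e
  | .comp e1 e2 => labels e1 ∪ labels e2
  | .alt e1 e2 => labels e1 ∪ labels e2

/-!
Each NRE denotes a relation built from edge relations by composition, union, reflexive-transitive
closure and domain tests, and the property "every `⟦E⟧_G`-step from `n` is matched by a
`⟦E⟧_H`-step from any `R`-partner of `n`, landing again in `R`" is preserved by each of these
operations. Edge steps are matched by the simulation itself, and a label test `⟨ℓ⟩` is matched
because `R` relates `ℓ` only to `ℓ`.
-/

def ForwardSim {α : Type*} (R r s : α → α → Prop) : Prop :=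
  ∀ ⦃n m n'⦄, R n m → r n n' → ∃ m', s m m' ∧ R n' m'

namespace ForwardSim

variable {α : Type*} {R r s r₁ s₁ r₂ s₂ : α → α → Prop}

theorem comp (h₁ : ForwardSim R r₁ s₁) (h₂ : ForwardSim R r₂ s₂) :
    ForwardSim R (Relation.Comp r₁ r₂) (Relation.Comp s₁ s₂) := by
  rintro n m n' hR ⟨k, hnk, hkn'⟩
  obtain ⟨mk, hmk, hRk⟩ := h₁ hR hnk
  obtain ⟨m', hm', hR'⟩ := h₂ hRk hkn'
  exact ⟨m', ⟨mk, hmk, hm'⟩, hR'⟩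

theorem sup (h₁ : ForwardSim R r₁ s₁) (h₂ : ForwardSim R r₂ s₂) :
    ForwardSim R (r₁ ⊔ r₂) (s₁ ⊔ s₂) := by
  rintro n m n' hR (h | h)
  · obtain ⟨m', hm', hR'⟩ := h₁ hR h
    exact ⟨m', Or.inl hm', hR'⟩
  · obtain ⟨m', hm', hR'⟩ := h₂ hR h
    exact ⟨m', Or.inr hm', hR'⟩

theorem reflTransGen (h : ForwardSim R r s) :
    ForwardSim R (Relation.ReflTransGen r) (Relation.ReflTransGen s) := by
  intro n m n' hR hrn
  induction hrn with
  | refl => exact ⟨m, .refl, hR⟩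
  | tail _ hstep ih =>
    obtain ⟨mk, hmk, hRk⟩ := ih
    obtain ⟨m', hm', hR'⟩ := h hRk hstep
    exact ⟨m', hmk.tail hm', hR'⟩

theorem domainTest (h : ForwardSim R r s) :
    ForwardSim R (fun n n' => n = n' ∧ ∃ k, r n k) (fun m m' => m = m' ∧ ∃ k, s m k) := by
  rintro n m _ hR ⟨rfl, k, hk⟩
  obtain ⟨mk, hmk, -⟩ := h hR hk
  exact ⟨m, ⟨rfl, mk, hmk⟩, hR⟩

end ForwardSim

namespace IsSimulation

variable {G H : Set (N × L × N)} {R : N → N → Prop}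

theorem forwardSim_pred (hsim : IsSimulation G H R) (p : L) :
    ForwardSim R (sem G (.pred p)) (sem H (.pred p)) :=
  fun n m n' hR h => hsim.2 n m hR p n' h

theorem forwardSim_wild (hsim : IsSimulation G H R) :
    ForwardSim R (sem G .wild) (sem H .wild) := by
  rintro n m n' hR ⟨p, hp⟩
  obtain ⟨m', hm', hR'⟩ := hsim.2 n m hR p n' hp
  exact ⟨m', ⟨p, hm'⟩, hR'⟩

theorem forwardSim_eps (hsim : IsSimulation G H R) :
    ForwardSim R (sem G .eps) (sem H .eps) := by
  rintro n m _ hR ⟨rfl, -⟩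
  exact ⟨m, ⟨rfl, (hsim.1 n m hR).2⟩, hR⟩

theorem forwardSim_node (hsim : IsSimulation G H R) {ℓ : N} (hℓ : ∀ m, R ℓ m → m = ℓ) :
    ForwardSim R (sem G (.node ℓ)) (sem H (.node ℓ)) := by
  rintro _ m _ hR ⟨rfl, rfl, -⟩
  obtain rfl := hℓ m hR
  exact ⟨_, ⟨rfl, rfl, (hsim.1 _ _ hR).2⟩, hR⟩

end IsSimulation

/-- Simulation preserves forward NRE semantics: if `R` is a simulation of `G` by `H`
that respects constant node labels, `(n, m) ∈ R` and `(n, n') ∈ ⟦E⟧_G`, then there is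
`m'` with `(m, m') ∈ ⟦E⟧_H` and `(n', m') ∈ R`. -/
theorem nre_forward_simulation (Const : Set N) (E : NRE N L)
    (G H : Set (N × L × N)) (R : N → N → Prop)
    (hsim : IsSimulation G H R)
    (hconst : ∀ n m, R n m → n ∈ Const → m = n)
    (hE : labels E ⊆ Const)
    (n m n' : N) (hR : R n m) (hsem : sem G E n n') :
    ∃ m', sem H E m m' ∧ R n' m' := by
  suffices ForwardSim R (sem G E) (sem H E) from this hR hsem
  clear hR hsem
  induction E with
  | eps => exact hsim.forwardSim_eps
  | pred p => exact hsim.forwardSim_pred p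
  | wild => exact hsim.forwardSim_wild
  | node ℓ => exact hsim.forwardSim_node fun m hR => hconst ℓ m hR (hE rfl)
  | test e ih => exact (ih hE).domainTest
  | star e ih => exact (ih hE).reflTransGen
  | comp e₁ e₂ ih₁ ih₂ =>
    exact (ih₁ (Set.subset_union_left.trans hE)).comp (ih₂ (Set.subset_union_right.trans hE))
  | alt e₁ e₂ ih₁ ih₂ =>
    exact (ih₁ (Set.subset_union_left.trans hE)).sup (ih₂ (Set.subset_union_right.trans hE))
end

section
/- The class of forward nested regular expressions is robust under simulation: if graph G is simulated by graph H (every node of G is simulated by some node of H), then for any forward NRE E, if ⟦E⟧_G is nonempty then ⟦E⟧_H is nonempty. -/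
variable {N L : Type*}

/-- A simulation respecting constant nodes. -/
def IsCSimulation (Const : Set N) (G H : Set (N × L × N)) (R : N → N → Prop) : Prop :=
  IsSimulation G H R ∧ ∀ n m, R n m → n ∈ Const → m = n

/-- `G` is simulated by `H`: some (constant-respecting) simulation relates every
node of `G` to some node of `H`. -/
def SimulatedBy (Const : Set N) (G H : Set (N × L × N)) : Prop :=
  ∃ R, IsCSimulation Const G H R ∧ ∀ n ∈ nodes G, ∃ m, R n m

/-! A match of `E` in `G` is carried along a simulation edge by edge, the constant-respecting
condition taking care of node tests. The one catch is that a star holds reflexively at every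
point of `N`, so a match may start outside `nodes G`, where the simulation relates nothing;
but such a match is a loop that holds in every graph, in particular in `H`. -/

theorem IsCSimulation.exists_sem {Const : Set N} {G H : Set (N × L × N)} {R : N → N → Prop}
    (hR : IsCSimulation Const G H R) {E : NRE N L} (hE : labels E ⊆ Const) {n n' m : N}
    (h : sem G E n n') (hnm : R n m) : ∃ m', sem H E m m' ∧ R n' m' := by
  obtain ⟨⟨hnodes, hstep⟩, hconst⟩ := hR
  induction E generalizing n n' m with
  | eps =>
    obtain ⟨rfl, -⟩ := h
    exact ⟨m, ⟨rfl, (hnodes n m hnm).2⟩, hnm⟩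
  | pred p => exact hstep n m hnm p n' h
  | wild =>
    obtain ⟨p, h⟩ := h
    obtain ⟨m', hm', hR'⟩ := hstep n m hnm p n' h
    exact ⟨m', ⟨p, hm'⟩, hR'⟩
  | node ℓ =>
    obtain ⟨rfl, rfl, -⟩ := h
    obtain rfl : m = n := hconst n m hnm (hE rfl)
    exact ⟨m, ⟨rfl, rfl, (hnodes m m hnm).2⟩, hnm⟩
  | test e ih =>
    obtain ⟨rfl, k, hk⟩ := h
    obtain ⟨k', hk', -⟩ := ih hE hk hnm
    exact ⟨m, ⟨rfl, k', hk'⟩, hnm⟩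
  | star e ih =>
    induction h with
    | refl => exact ⟨m, .refl, hnm⟩
    | tail _ hbc ihab =>
      obtain ⟨mb, hmb, hRb⟩ := ihab
      obtain ⟨mc, hmc, hRc⟩ := ih hE hbc hRb
      exact ⟨mc, Relation.ReflTransGen.tail hmb hmc, hRc⟩
  | comp e₁ e₂ ih₁ ih₂ =>
    obtain ⟨k, h₁, h₂⟩ := h
    obtain ⟨mk, hmk, hRk⟩ := ih₁ (Set.subset_union_left.trans hE) h₁ hnm
    obtain ⟨m', hm', hR'⟩ := ih₂ (Set.subset_union_right.trans hE) h₂ hRk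
    exact ⟨m', ⟨mk, hmk, hm'⟩, hR'⟩
  | alt e₁ e₂ ih₁ ih₂ =>
    rcases h with h | h
    · obtain ⟨m', hm', hR'⟩ := ih₁ (Set.subset_union_left.trans hE) h hnm
      exact ⟨m', Or.inl hm', hR'⟩
    · obtain ⟨m', hm', hR'⟩ := ih₂ (Set.subset_union_right.trans hE) h hnm
      exact ⟨m', Or.inr hm', hR'⟩

theorem sem_of_notMem_nodes {G : Set (N × L × N)} {E : NRE N L} {n n' : N}
    (hn : n ∉ nodes G) (h : sem G E n n') : n' = n ∧ ∀ K, sem K E n n := by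
  induction E generalizing n' with
  | eps => exact absurd h.2 (h.1 ▸ hn)
  | pred p => exact absurd ⟨p, n', Or.inl h⟩ hn
  | wild =>
    obtain ⟨p, h⟩ := h
    exact absurd ⟨p, n', Or.inl h⟩ hn
  | node ℓ => exact absurd h.2.2 hn
  | test e ih =>
    obtain ⟨rfl, k, hk⟩ := h
    exact ⟨rfl, fun K => ⟨rfl, _, (ih hk).2 K⟩⟩
  | star e ih =>
    refine ⟨?_, fun K => .refl⟩
    induction h with
    | refl => rfl
    | tail _ hbc ihab =>
      subst ihab
      exact (ih hbc).1
  | comp e₁ e₂ ih₁ ih₂ =>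
    obtain ⟨k, h₁, h₂⟩ := h
    obtain ⟨rfl, h₁K⟩ := ih₁ h₁
    obtain ⟨rfl, h₂K⟩ := ih₂ h₂
    exact ⟨rfl, fun K => ⟨_, h₁K K, h₂K K⟩⟩
  | alt e₁ e₂ ih₁ ih₂ =>
    rcases h with h | h
    · obtain ⟨rfl, hK⟩ := ih₁ h
      exact ⟨rfl, fun K => Or.inl (hK K)⟩
    · obtain ⟨rfl, hK⟩ := ih₂ h
      exact ⟨rfl, fun K => Or.inr (hK K)⟩

/-- Forward NREs are robust under simulation: if `G` is simulated by `H` and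
`⟦E⟧_G` is nonempty, then `⟦E⟧_H` is nonempty. -/
theorem forward_nre_robust_under_simulation (Const : Set N) (E : NRE N L)
    (G H : Set (N × L × N))
    (hE : labels E ⊆ Const)
    (hsim : SimulatedBy Const G H)
    (hne : ∃ n n', sem G E n n') :
    ∃ m m', sem H E m m' := by
  obtain ⟨n, n', hGE⟩ := hne
  obtain ⟨R, hR, htotal⟩ := hsim
  by_cases hn : n ∈ nodes G
  · obtain ⟨m, hnm⟩ := htotal n hn
    obtain ⟨m', hHE, -⟩ := hR.exists_sem hE hGE hnm
    exact ⟨m, m', hHE⟩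
  · exact ⟨n, n, (sem_of_notMem_nodes hn hGE).2 H⟩
end

section
/- If J is a typed graph satisfying the type-propagation and predicate-functionality dependencies of a deterministic shape schema S, and the co-occurring type sets N_J (as constructed by iterating Δ from the frontier of J) contain no set X with both Literal and some non-literal type T, then J ∪ G_S satisfies all predicate-functionality dependencies of S, where G_S is the completion graph constructed by adding, for each frontier pair and each required predicate, exactly one fresh outgoing edge per (node, predicate) pair. -/
/-- Multiplicities of shape constraints. -/
inductive Mult | one | opt | star | plus

/-- A deterministic shape schema: at most one constraint per (type, predicate). -/
structure DShape (T P : Type*) where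
  delta : T → P → Option (T × Mult)

/-- A typed graph: a set of triples together with a typing of nodes. -/
structure TGraph (N T P : Type*) where
  edges : Set (N × P × N)
  types : N → Set T

variable {N T P : Type*}

/-- Nodes of a typed graph. -/
def gnodes (J : TGraph N T P) : Set N :=
  {n | (∃ p m, (n, p, m) ∈ J.edges ∨ (m, p, n) ∈ J.edges) ∨ (J.types n).Nonempty}

/-- Satisfaction of all type-propagation dependencies. -/
def SatTP (S : DShape T P) (J : TGraph N T P) : Prop :=
  ∀ n t p s μ m, t ∈ J.types n → S.delta t p = some (s, μ) →
    (n, p, m) ∈ J.edges → s ∈ J.types m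

/-- Satisfaction of all predicate-functionality dependencies (μ ∈ {1, ?}). -/
def SatPF (S : DShape T P) (J : TGraph N T P) : Prop :=
  ∀ n t p s μ, t ∈ J.types n → S.delta t p = some (s, μ) →
    (μ = Mult.one ∨ μ = Mult.opt) →
    ∀ m m', (n, p, m) ∈ J.edges → (n, p, m') ∈ J.edges → m = m'

/-- Predicates required by a set of types (μ ∈ {1, +}). -/
def Req (S : DShape T P) (X : Set T) : Set P :=
  {p | ∃ t ∈ X, ∃ s, S.delta t p = some (s, Mult.one) ∨ S.delta t p = some (s, Mult.plus)}

/-- Types that must hold at any node reached by a `p`-edge from a node with types `X`. -/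
def Del (S : DShape T P) (X : Set T) (p : P) : Set T :=
  {s | ∃ t ∈ X, ∃ μ, S.delta t p = some (s, μ)}

/-- The frontier of `J`: pairs `(n, p)` where `n` requires an outgoing `p`-edge
but has none. -/
def Frontier (S : DShape T P) (J : TGraph N T P) : Set (N × P) :=
  {x | x.1 ∈ gnodes J ∧ x.2 ∈ Req S (J.types x.1) ∧ ¬ ∃ m, (x.1, x.2, m) ∈ J.edges}

/-- The iterated sets of co-occurring types starting from the frontier of `J`. -/
def NJ (S : DShape T P) (J : TGraph N T P) : ℕ → Set (Set T)
  | 0 => {X | ∃ x ∈ Frontier S J, X = Del S (J.types x.1) x.2}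
  | i + 1 => {Y | ∃ X ∈ NJ S J i, ∃ p ∈ Req S X, Y = Del S X p}

/-- Union of two typed graphs. -/
def unionG (J K : TGraph N T P) : TGraph N T P :=
  ⟨J.edges ∪ K.edges, fun n => J.types n ∪ K.types n⟩

theorem mem_gnodes_of_edge {J : TGraph N T P} {n m : N} {p : P} (h : (n, p, m) ∈ J.edges) :
    n ∈ gnodes J :=
  Or.inl ⟨p, m, Or.inl h⟩

theorem not_mem_edges_of_completion {S : DShape T P} {J K : TGraph N T P}
    (hKsrc : ∀ n p m, (n, p, m) ∈ K.edges → n ∈ gnodes J → (n, p) ∈ Frontier S J)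
    {n m m' : N} {p : P} (hK : (n, p, m) ∈ K.edges) : (n, p, m') ∉ J.edges :=
  fun hJ => (hKsrc n p m hK (mem_gnodes_of_edge hJ)).2.2 ⟨m', hJ⟩

theorem completion_satisfies_pf_general (S : DShape T P) (J K : TGraph N T P)
    (hPF : SatPF S J)
    (hKsrc : ∀ n p m, (n, p, m) ∈ K.edges → n ∈ gnodes J → (n, p) ∈ Frontier S J)
    (hKfun : ∀ n p m m', (n, p, m) ∈ K.edges → (n, p, m') ∈ K.edges → m = m')
    (hKfreshT : ∀ n, (K.types n).Nonempty → n ∉ gnodes J) :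
    SatPF S (unionG J K) := by
  intro n t p s μ ht hδ hμ m m' hm hm'
  rcases hm with hmJ | hmK <;> rcases hm' with hm'J | hm'K
  · have htJ : t ∈ J.types n :=
      ht.resolve_right fun htK => hKfreshT n ⟨t, htK⟩ (mem_gnodes_of_edge hmJ)
    exact hPF n t p s μ htJ hδ hμ m m' hmJ hm'J
  · exact absurd hmJ (not_mem_edges_of_completion hKsrc hm'K)
  · exact absurd hm'J (not_mem_edges_of_completion hKsrc hmK)
  · exact hKfun n p m m' hmK hm'K

/-- If `J` satisfies the type-propagation and predicate-functionality dependencies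
of a deterministic shape schema `S`, the co-occurring type sets contain no set mixing
`Literal` with a non-literal type, and `K` is a completion graph that adds exactly one
fresh outgoing edge per (node, predicate) pair and only at frontier pairs of `J`, then
`J ∪ K` satisfies all predicate-functionality dependencies of `S`. -/
theorem completion_satisfies_pf (S : DShape T P) (J K : TGraph N T P)
    (IsLit : T → Prop)
    (hTP : SatTP S J) (hPF : SatPF S J)
    (hnoclash : ∀ i X, X ∈ NJ S J i → ¬ ∃ t ∈ X, IsLit t ∧ ∃ t' ∈ X, ¬ IsLit t')
    (hKsrc : ∀ n p m, (n, p, m) ∈ K.edges → n ∈ gnodes J → (n, p) ∈ Frontier S J)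
    (hKfun : ∀ n p m m', (n, p, m) ∈ K.edges → (n, p, m') ∈ K.edges → m = m')
    (hKfreshT : ∀ n, (K.types n).Nonempty → n ∉ gnodes J) :
    SatPF S (unionG J K) :=
  completion_satisfies_pf_general S J K hPF hKsrc hKfun hKfreshT
end
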